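/- Let p be a prime, n, m ≥ 2 integers, K a finite extension of ℚ_p containing a primitive n-th root of unity ζ_n and a primitive m-th root of unity ζ_m, π ∈ O_K a uniformizer, and r ≥ 1 an integer. Let A_r = [[ζ_n·π^r, 0], [ζ_n − 1, π^r]] and B_r = [[ζ_m, −(ζ_m − 1)·π^{−r}], [0, 1]] in GL(2,K). Then [A_r] has order exactly n in PGL(2,K), and its fixed points in P¹(K) are exactly [0:1] and [π^r : 1]; and [B_r] has order exactly m in PGL(2,K), and its fixed points in P¹(K) are exactly [π^{−r} : 1] and [1:0]. -/

import Mathlib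

open Matrix

abbrev GL2 (F : Type) [Field F] : Type := Matrix.GeneralLinearGroup (Fin 2) F

abbrev PGL2 (F : Type) [Field F] : Type := GL2 F ⧸ Subgroup.center (GL2 F)

def PGLmk (F : Type) [Field F] : GL2 F →* PGL2 F := QuotientGroup.mk' _

/-- The matrix `A_r = [[ζ·π^r, 0], [ζ − 1, π^r]]` as an element of `GL(2,K)`. -/
noncomputable def matA (K : Type) [Field K] (ζ π : K) (r : ℕ) (hζ : ζ ≠ 0) (hπ : π ≠ 0) :
    GL2 K :=
  Matrix.GeneralLinearGroup.mkOfDetNeZero !![ζ * π ^ r, 0; ζ - 1, π ^ r]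
    (by
      have h : (!![ζ * π ^ r, 0; ζ - 1, π ^ r] : Matrix (Fin 2) (Fin 2) K).det
          = ζ * π ^ r * π ^ r := by
        simp [Matrix.det_fin_two_of]
      rw [h]
      exact mul_ne_zero (mul_ne_zero hζ (pow_ne_zero _ hπ)) (pow_ne_zero _ hπ))

/-- The matrix `B_r = [[ζ, −(ζ − 1)·π^(−r)], [0, 1]]` as an element of `GL(2,K)`. -/
noncomputable def matB (K : Type) [Field K] (ζ π : K) (r : ℕ) (hζ : ζ ≠ 0) : GL2 K :=
  Matrix.GeneralLinearGroup.mkOfDetNeZero !![ζ, -(ζ - 1) * π ^ (-(r : ℤ)); 0, 1]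
    (by
      have h : (!![ζ, -(ζ - 1) * π ^ (-(r : ℤ)); 0, 1] : Matrix (Fin 2) (Fin 2) K).det = ζ := by
        simp [Matrix.det_fin_two_of]
      rw [h]
      exact hζ)

/-- The action of `GL(2,F)` on the projective line `P¹(F)`. -/
noncomputable def projAct {F : Type} [Field F] (A : GL2 F) :
    Projectivization F (Fin 2 → F) → Projectivization F (Fin 2 → F) :=
  Projectivization.map ((Matrix.GeneralLinearGroup.toLin A).toLinearEquiv :
      (Fin 2 → F) →ₗ[F] (Fin 2 → F))
    (Matrix.GeneralLinearGroup.toLin A).toLinearEquiv.injective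

/-- `x ∈ P¹(F)` is a fixed point of the element `g` of `PGL(2,F)`. -/
def FixedPt {F : Type} [Field F] (g : PGL2 F) (x : Projectivization F (Fin 2 → F)) : Prop :=
  ∀ A : GL2 F, PGLmk F A = g → projAct A x = x

/-- The point `[a : 1]` of `P¹(F)`. -/
def Pt (F : Type) [Field F] (a : F) : Projectivization F (Fin 2 → F) :=
  Projectivization.mk F ![a, 1] (by intro h; simpa using congrFun h 1)

/-- The point `[1 : 0] = ∞` of `P¹(F)`. -/
def Pinf (F : Type) [Field F] : Projectivization F (Fin 2 → F) :=
  Projectivization.mk F ![1, 0] (by intro h; simpa using congrFun h 0)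

/-!
Both matrices are triangular with distinct diagonal entries `a ≠ d`. The `k`-th power of
`[[a, b], [0, d]]` is `[[a^k, t], [0, d^k]]` with `(a - d) t = b (a^k - d^k)`, so it is scalar
exactly when `a^k = d^k`; hence the order of its class in `PGL(2)` is the order of `a / d`,
which is `ζ` for both `A_r` and `B_r`. A point of `P¹` is fixed exactly when it is spanned by an
eigenvector: for `[[a, b], [0, d]]` these are `[1 : 0]` and `[t : 1]` with `(d - a) t = b`, for
`[[a, 0], [c, d]]` they are `[0 : 1]` and `[t : 1]` with `c t = a - d`.
-/

section

variable {F : Type} [Field F]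

namespace Matrix

theorem scalar_fin_two (s : F) : scalar (Fin 2) s = !![s, 0; 0, s] :=
  diagonal_fin_two _

theorem exists_upperTriangular_pow_eq (a b d : F) (k : ℕ) : ∃ t : F,
    !![a, b; 0, d] ^ k = !![a ^ k, t; 0, d ^ k] ∧ (a - d) * t = b * (a ^ k - d ^ k) := by
  induction k with
  | zero => exact ⟨0, by simp [one_fin_two], by ring⟩
  | succ k ih =>
    obtain ⟨t, hpow, ht⟩ := ih
    refine ⟨a ^ k * b + t * d, ?_, by linear_combination d * ht⟩
    rw [pow_succ, hpow, mul_fin_two]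
    simp [pow_succ]

theorem upperTriangular_pow_eq_scalar_iff {a d : F} (b : F) (had : a ≠ d) (k : ℕ) :
    (∃ s : F, !![a, b; 0, d] ^ k = scalar (Fin 2) s) ↔ a ^ k = d ^ k := by
  obtain ⟨t, hpow, ht⟩ := exists_upperTriangular_pow_eq a b d k
  simp only [hpow, scalar_fin_two, EmbeddingLike.apply_eq_iff_eq, vecCons_inj, and_true]
  constructor
  · rintro ⟨s, ⟨hs, -⟩, -, hds⟩
    exact hs.trans hds.symm
  · intro hk
    have ht0 : t = 0 := by
      rw [hk, sub_self, mul_zero] at ht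
      exact (mul_eq_zero.mp ht).resolve_left (sub_ne_zero.mpr had)
    exact ⟨d ^ k, ⟨hk, ht0⟩, trivial, rfl⟩

theorem lowerTriangular_pow_eq_scalar_iff {a d : F} (c : F) (had : a ≠ d) (k : ℕ) :
    (∃ s : F, !![a, 0; c, d] ^ k = scalar (Fin 2) s) ↔ a ^ k = d ^ k := by
  have htranspose : !![a, 0; c, d]ᵀ = !![a, c; 0, d] := by
    ext i j; fin_cases i <;> fin_cases j <;> rfl
  rw [← upperTriangular_pow_eq_scalar_iff c had k, ← htranspose]
  refine exists_congr fun s ↦ ?_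
  rw [← transpose_inj, transpose_pow, scalar_apply, diagonal_transpose]

theorem mulVec_fin_two_eq_smul_iff (a b c d μ : F) (v : Fin 2 → F) :
    !![a, b; c, d] *ᵥ v = μ • v ↔ a * v 0 + b * v 1 = μ * v 0 ∧ c * v 0 + d * v 1 = μ * v 1 := by
  simp [funext_iff, Fin.forall_fin_two, dotProduct, Fin.sum_univ_two]

theorem GeneralLinearGroup.mulVec_ne_zero {n R : Type*} [Fintype n] [DecidableEq n]
    [CommRing R] (A : GeneralLinearGroup n R) {v : n → R} (hv : v ≠ 0) :
    (A : Matrix n n R) *ᵥ v ≠ 0 := by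
  simpa using (mulVec_injective_of_isUnit A.isUnit).ne hv

end Matrix

theorem PGLmk_eq_one_iff (g : GL2 F) :
    PGLmk F g = 1 ↔ ∃ s : F, (g : Matrix (Fin 2) (Fin 2) F) = scalar (Fin 2) s := by
  rw [PGLmk, QuotientGroup.mk'_apply, QuotientGroup.eq_one_iff,
    Matrix.GeneralLinearGroup.mem_center_iff_val_mem_range_scalar]
  exact ⟨fun ⟨s, hs⟩ ↦ ⟨s, hs.symm⟩, fun ⟨s, hs⟩ ↦ ⟨s, hs.symm⟩⟩

theorem orderOf_PGLmk_eq_orderOf_div (A : GL2 F) {a d : F} (hd : d ≠ 0)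
    (h : ∀ k : ℕ, (∃ s : F, (A : Matrix (Fin 2) (Fin 2) F) ^ k = scalar (Fin 2) s) ↔
      a ^ k = d ^ k) :
    orderOf (PGLmk F A) = orderOf (a / d) := by
  refine orderOf_eq_orderOf_iff.mpr fun k ↦ ?_
  rw [← map_pow, PGLmk_eq_one_iff, Units.val_pow_eq_pow_val, h, div_pow,
    div_eq_one_iff_eq (pow_ne_zero k hd)]

theorem projAct_mk (A : GL2 F) {v : Fin 2 → F} (hv : v ≠ 0) :
    projAct A (Projectivization.mk F v hv) =
      Projectivization.mk F ((A : Matrix (Fin 2) (Fin 2) F) *ᵥ v)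
        (Matrix.GeneralLinearGroup.mulVec_ne_zero A hv) :=
  Projectivization.map_mk _ _ _ _

theorem projAct_mk_eq_self_iff (A : GL2 F) {v : Fin 2 → F} (hv : v ≠ 0) :
    projAct A (Projectivization.mk F v hv) = Projectivization.mk F v hv ↔
      ∃ μ : F, (A : Matrix (Fin 2) (Fin 2) F) *ᵥ v = μ • v := by
  rw [projAct_mk, Projectivization.mk_eq_mk_iff']
  exact exists_congr fun μ ↦ eq_comm

theorem projAct_eq_of_PGLmk_eq {A C : GL2 F} (h : PGLmk F A = PGLmk F C) :
    projAct A = projAct C := by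
  obtain ⟨s, hs⟩ := (PGLmk_eq_one_iff (A⁻¹ * C)).mp (by rw [map_mul, map_inv, h, inv_mul_cancel])
  have hC : (C : Matrix (Fin 2) (Fin 2) F) = s • (A : Matrix (Fin 2) (Fin 2) F) := by
    rw [← mul_inv_cancel_left A C, Units.val_mul, hs, Matrix.scalar_apply,
      ← Matrix.smul_one_eq_diagonal, Matrix.mul_smul, Matrix.mul_one]
  funext x
  induction x using Projectivization.ind with
  | h v hv =>
    rw [projAct_mk, projAct_mk, eq_comm, Projectivization.mk_eq_mk_iff']
    exact ⟨s, by rw [hC, Matrix.smul_mulVec]⟩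

theorem fixedPt_PGLmk_iff (A : GL2 F) (x : Projectivization F (Fin 2 → F)) :
    FixedPt (PGLmk F A) x ↔ projAct A x = x :=
  ⟨fun h ↦ h A rfl, fun h C hC ↦ by rw [projAct_eq_of_PGLmk_eq hC, h]⟩

theorem mk_eq_Pt_iff {v : Fin 2 → F} (hv : v ≠ 0) (t : F) :
    Projectivization.mk F v hv = Pt F t ↔ v 1 ≠ 0 ∧ v 0 = t * v 1 := by
  rw [Pt, Projectivization.mk_eq_mk_iff']
  constructor
  · rintro ⟨a, rfl⟩
    have ha : a ≠ 0 := by rintro rfl; simp at hv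
    simpa [mul_comm] using ha
  · rintro ⟨-, h0⟩
    exact ⟨v 1, funext <| Fin.forall_fin_two.mpr ⟨by simp [h0, mul_comm], by simp⟩⟩

theorem mk_eq_Pinf_iff {v : Fin 2 → F} (hv : v ≠ 0) :
    Projectivization.mk F v hv = Pinf F ↔ v 1 = 0 := by
  rw [Pinf, Projectivization.mk_eq_mk_iff']
  constructor
  · rintro ⟨a, rfl⟩
    simp
  · intro h1
    exact ⟨v 0, funext <| Fin.forall_fin_two.mpr ⟨by simp, by simp [h1]⟩⟩

theorem projAct_upperTriangular_eq_self_iff (A : GL2 F) {a b d t : F}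
    (hA : (A : Matrix (Fin 2) (Fin 2) F) = !![a, b; 0, d]) (had : a ≠ d) (ht : (d - a) * t = b)
    (x : Projectivization F (Fin 2 → F)) :
    projAct A x = x ↔ x = Pt F t ∨ x = Pinf F := by
  induction x using Projectivization.ind with
  | h v hv =>
    rw [projAct_mk_eq_self_iff, mk_eq_Pt_iff, mk_eq_Pinf_iff, hA]
    simp only [Matrix.mulVec_fin_two_eq_smul_iff, zero_mul, zero_add]
    constructor
    · rintro ⟨μ, h0, h1⟩
      refine or_iff_not_imp_right.mpr fun hv1 ↦ ⟨hv1, ?_⟩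
      obtain rfl : μ = d := (mul_right_cancel₀ hv1 h1).symm
      exact mul_left_cancel₀ (sub_ne_zero.mpr had.symm) (by linear_combination -h0 - v 1 * ht)
    · rintro (⟨-, h0⟩ | h1)
      · exact ⟨d, by linear_combination -(d - a) * h0 - v 1 * ht, rfl⟩
      · exact ⟨a, by simp [h1], by simp [h1]⟩

theorem projAct_lowerTriangular_eq_self_iff (A : GL2 F) {a c d t : F}
    (hA : (A : Matrix (Fin 2) (Fin 2) F) = !![a, 0; c, d]) (had : a ≠ d) (ht : c * t = a - d)
    (x : Projectivization F (Fin 2 → F)) :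
    projAct A x = x ↔ x = Pt F 0 ∨ x = Pt F t := by
  induction x using Projectivization.ind with
  | h v hv =>
    rw [projAct_mk_eq_self_iff, mk_eq_Pt_iff, mk_eq_Pt_iff, hA]
    simp only [Matrix.mulVec_fin_two_eq_smul_iff, zero_mul, add_zero]
    have hc : c ≠ 0 := by rintro rfl; exact had (sub_eq_zero.mp (by simpa using ht.symm))
    constructor
    · rintro ⟨μ, h0, h1⟩
      by_cases hv0 : v 0 = 0
      · exact Or.inl ⟨fun hv1 ↦ hv (funext <| Fin.forall_fin_two.mpr ⟨hv0, hv1⟩), by simp [hv0]⟩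
      obtain rfl : μ = a := (mul_right_cancel₀ hv0 h0).symm
      have hv01 : v 0 = t * v 1 :=
        mul_left_cancel₀ hc (by linear_combination h1 - v 1 * ht)
      exact Or.inr ⟨fun hv1 ↦ hv0 (by simp [hv01, hv1]), hv01⟩
    · rintro (⟨-, h0⟩ | ⟨-, h0⟩)
      · exact ⟨d, by simp [h0], by simp [h0]⟩
      · exact ⟨a, rfl, by linear_combination c * h0 + v 1 * ht⟩

theorem orderOf_PGLmk_matA {ζ π : F} (r : ℕ) (hζ0 : ζ ≠ 0) (hπ : π ≠ 0) (hζ1 : ζ ≠ 1) :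
    orderOf (PGLmk F (matA F ζ π r hζ0 hπ)) = orderOf ζ := by
  have hπr : π ^ r ≠ 0 := pow_ne_zero r hπ
  have had : ζ * π ^ r ≠ π ^ r := fun h ↦ hζ1 ((mul_eq_right₀ hπr).mp h)
  rw [orderOf_PGLmk_eq_orderOf_div _ hπr (Matrix.lowerTriangular_pow_eq_scalar_iff (ζ - 1) had),
    mul_div_cancel_right₀ ζ hπr]

theorem fixedPt_PGLmk_matA_iff {ζ π : F} (r : ℕ) (hζ0 : ζ ≠ 0) (hπ : π ≠ 0) (hζ1 : ζ ≠ 1)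
    (x : Projectivization F (Fin 2 → F)) :
    FixedPt (PGLmk F (matA F ζ π r hζ0 hπ)) x ↔ x = Pt F 0 ∨ x = Pt F (π ^ r) := by
  have had : ζ * π ^ r ≠ π ^ r := fun h ↦ hζ1 ((mul_eq_right₀ (pow_ne_zero r hπ)).mp h)
  rw [fixedPt_PGLmk_iff]
  exact projAct_lowerTriangular_eq_self_iff _ rfl had (by ring) x

theorem orderOf_PGLmk_matB {ζ : F} (π : F) (r : ℕ) (hζ0 : ζ ≠ 0) (hζ1 : ζ ≠ 1) :
    orderOf (PGLmk F (matB F ζ π r hζ0)) = orderOf ζ := by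
  rw [orderOf_PGLmk_eq_orderOf_div _ one_ne_zero (Matrix.upperTriangular_pow_eq_scalar_iff _ hζ1),
    div_one]

theorem fixedPt_PGLmk_matB_iff {ζ : F} (π : F) (r : ℕ) (hζ0 : ζ ≠ 0) (hζ1 : ζ ≠ 1)
    (x : Projectivization F (Fin 2 → F)) :
    FixedPt (PGLmk F (matB F ζ π r hζ0)) x ↔ x = Pt F (π ^ (-(r : ℤ))) ∨ x = Pinf F := by
  rw [fixedPt_PGLmk_iff]
  exact projAct_upperTriangular_eq_self_iff _ rfl hζ1 (by ring) x

end

theorem stmt9 (n m : ℕ) (K : Type) [NormedField K]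
    (hn : 2 ≤ n) (hm : 2 ≤ m)
    (ζn ζm : K) (hζn : IsPrimitiveRoot ζn n) (hζm : IsPrimitiveRoot ζm m)
    (π : K) (hπ0 : π ≠ 0)
    (r : ℕ) :
    (orderOf (PGLmk K (matA K ζn π r (hζn.ne_zero (by omega)) hπ0)) = n ∧
      ∀ x : Projectivization K (Fin 2 → K),
        FixedPt (PGLmk K (matA K ζn π r (hζn.ne_zero (by omega)) hπ0)) x ↔
          x = Pt K 0 ∨ x = Pt K (π ^ r)) ∧
    (orderOf (PGLmk K (matB K ζm π r (hζm.ne_zero (by omega)))) = m ∧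
      ∀ x : Projectivization K (Fin 2 → K),
        FixedPt (PGLmk K (matB K ζm π r (hζm.ne_zero (by omega)))) x ↔
          x = Pt K (π ^ (-(r : ℤ))) ∨ x = Pinf K) := by
  have hζn1 : ζn ≠ 1 := hζn.ne_one (by omega)
  have hζm1 : ζm ≠ 1 := hζm.ne_one (by omega)
  exact ⟨⟨(orderOf_PGLmk_matA r _ hπ0 hζn1).trans hζn.eq_orderOf.symm,
      fixedPt_PGLmk_matA_iff r _ hπ0 hζn1⟩,
    ⟨(orderOf_PGLmk_matB π r _ hζm1).trans hζm.eq_orderOf.symm,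
      fixedPt_PGLmk_matB_iff π r _ hζm1⟩⟩
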